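/- Let μ ∈ ℝ, σ > 0 and β ≥ 0. Then the off-diagonal entry of the matrix K_β(μ,σ) = ∫₀^∞ u uᵀ f_{μ,σ}^{1+2β} dx − ξ ξᵀ (where ξ = ∫₀^∞ u f_{μ,σ}^{1+β} dx) satisfies ∫₀^∞ u₁(x) u₂(x) f_{μ,σ}(x)^{1+2β} dx − ( ∫₀^∞ u₁(x) f_{μ,σ}(x)^{1+β} dx ) · ( ∫₀^∞ u₂(x) f_{μ,σ}(x)^{1+β} dx ) = L*(β,μ,σ) · β( 4β − 4 − 8β²σ²/(1+2β) ) + L**(β,μ,σ) · σβ²(βσ² − β − 1)/(1+β). -/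

import Mathlib

open Real MeasureTheory Set

/-- The log-normal density with parameters `μ` and `σ`. -/
noncomputable def lognormalPdf (μ σ : ℝ) (x : ℝ) : ℝ :=
  if 0 < x then
    (1 / (x * σ * Real.sqrt (2 * Real.pi))) * Real.exp (-(Real.log x - μ) ^ 2 / (2 * σ ^ 2))
  else 0

/-- First component of the score function of the log-normal model. -/
noncomputable def scoreU1 (μ σ : ℝ) (x : ℝ) : ℝ := (Real.log x - μ) / σ ^ 2

/-- Second component of the score function of the log-normal model. -/
noncomputable def scoreU2 (μ σ : ℝ) (x : ℝ) : ℝ := ((Real.log x - μ) ^ 2 - σ ^ 2) / σ ^ 3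

/-- The factor `L*(β, μ, σ)`. -/
noncomputable def Lstar (β μ σ : ℝ) : ℝ :=
  Real.exp (-2 * β * μ + 2 * β ^ 2 * σ ^ 2 / (1 + 2 * β)) /
    (σ ^ (2 * β + 1) * (2 * Real.pi) ^ β * (1 + 2 * β) ^ ((5 : ℝ) / 2))

/-- The factor `L**(β, μ, σ)`. -/
noncomputable def Lstarstar (β μ σ : ℝ) : ℝ :=
  Real.exp (-2 * β * μ + β ^ 2 * σ ^ 2 / (1 + β)) /
    (σ ^ (2 * β + 2) * (2 * Real.pi) ^ β * (1 + β) ^ 3)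

open Filter

/-!
Substituting `x = exp y` turns `f_{μ,σ}(x) ^ p dx` into a constant multiple of a Gaussian in `y`:
the exponent `(1 - p) y - p (y - μ)² / (2σ²)` completes to a normal law with mean
`μ + (1 - p) σ² / p` and variance `σ² / p`. Both score components are polynomials of degree at
most 3 in `log x - μ`, so each integral in `K_β` is `∫₀^∞ f_{μ,σ}^p` times a normal moment of
order at most 3, with `p = 1 + 2β` or `p = 1 + β`; what remains is algebra.
-/

section GaussianMoments

variable {a : ℝ}

lemma integrable_pow_mul_exp_neg_mul_sq (ha : 0 < a) (k : ℕ) :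
    Integrable fun x : ℝ => x ^ k * exp (-a * x ^ 2) := by
  simpa using integrable_rpow_mul_exp_neg_mul_sq ha (neg_one_lt_zero.trans_le k.cast_nonneg)

lemma integral_pow_mul_exp_neg_mul_sq_of_odd {k : ℕ} (hk : Odd k) :
    ∫ x : ℝ, x ^ k * exp (-a * x ^ 2) = 0 := by
  have h := integral_neg_eq_self (fun x : ℝ => x ^ k * exp (-a * x ^ 2)) volume
  simp only [hk.neg_pow, neg_sq, neg_mul, integral_neg] at h ⊢
  linarith

lemma integral_sq_mul_exp_neg_mul_sq (ha : 0 < a) :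
    ∫ x : ℝ, x ^ 2 * exp (-a * x ^ 2) = √(π / a) / (2 * a) := by
  have hderiv (x : ℝ) : HasDerivAt (fun x : ℝ => x * exp (-a * x ^ 2))
      (exp (-a * x ^ 2) - 2 * a * (x ^ 2 * exp (-a * x ^ 2))) x := by
    have h := (hasDerivAt_id x).fun_mul (((hasDerivAt_pow 2 x).const_mul (-a)).exp)
    refine h.congr_deriv ?_
    simp only [id]
    ring
  have hdecay : Tendsto (fun x : ℝ => x * exp (-a * x ^ 2)) (cocompact ℝ) (nhds 0) := by
    refine tendsto_zero_iff_norm_tendsto_zero.2 <|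
      (tendsto_rpow_abs_mul_exp_neg_mul_sq_cocompact ha 1).congr fun x => ?_
    simp [abs_of_pos (exp_pos _)]
  have h0 := integral_of_hasDerivAt_of_tendsto hderiv
    ((integrable_exp_neg_mul_sq ha).sub ((integrable_pow_mul_exp_neg_mul_sq ha 2).const_mul _))
    (hdecay.mono_left atBot_le_cocompact) (hdecay.mono_left atTop_le_cocompact)
  rw [sub_self, integral_sub (integrable_exp_neg_mul_sq ha)
    ((integrable_pow_mul_exp_neg_mul_sq ha 2).const_mul _), integral_const_mul,
    integral_gaussian] at h0
  rw [eq_div_iff (by positivity)]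
  linarith

lemma integral_cubic_mul_exp_neg_mul_sq (ha : 0 < a) (c₀ c₁ c₂ c₃ : ℝ) :
    ∫ x : ℝ, (c₀ + c₁ * x + c₂ * x ^ 2 + c₃ * x ^ 3) * exp (-a * x ^ 2)
      = (c₀ + c₂ / (2 * a)) * √(π / a) := by
  have hint := integrable_pow_mul_exp_neg_mul_sq ha
  have hexpand : (fun x : ℝ => (c₀ + c₁ * x + c₂ * x ^ 2 + c₃ * x ^ 3) * exp (-a * x ^ 2))
      = fun x => c₀ * (x ^ 0 * exp (-a * x ^ 2)) + c₁ * (x ^ 1 * exp (-a * x ^ 2))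
        + c₂ * (x ^ 2 * exp (-a * x ^ 2)) + c₃ * (x ^ 3 * exp (-a * x ^ 2)) := by
    ext x; ring
  rw [hexpand, integral_add (by fun_prop) (by fun_prop), integral_add (by fun_prop) (by fun_prop),
    integral_add (by fun_prop) (by fun_prop)]
  simp only [integral_const_mul]
  rw [integral_pow_mul_exp_neg_mul_sq_of_odd odd_one,
    integral_pow_mul_exp_neg_mul_sq_of_odd (by decide : Odd 3), integral_sq_mul_exp_neg_mul_sq ha]
  simp only [pow_zero, one_mul, integral_gaussian]
  ring

lemma integral_cubic_mul_exp_neg_mul_sub_sq (ha : 0 < a) (m c₀ c₁ c₂ c₃ : ℝ) :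
    ∫ x : ℝ, (c₀ + c₁ * x + c₂ * x ^ 2 + c₃ * x ^ 3) * exp (-a * (x - m) ^ 2)
      = (c₀ + c₁ * m + c₂ * (m ^ 2 + 1 / (2 * a)) + c₃ * (m ^ 3 + 3 * m / (2 * a)))
        * √(π / a) := by
  rw [← integral_add_right_eq_self _ m]
  simp only [add_sub_cancel_right]
  convert integral_cubic_mul_exp_neg_mul_sq ha (c₀ + c₁ * m + c₂ * m ^ 2 + c₃ * m ^ 3)
    (c₁ + 2 * c₂ * m + 3 * c₃ * m ^ 2) (c₂ + 3 * c₃ * m) c₃ using 1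
  · congr 1; ext x; ring
  · field_simp; ring

end GaussianMoments

lemma integral_Ioi_zero_eq_integral_exp_mul_comp_exp (g : ℝ → ℝ) :
    ∫ x in Ioi (0 : ℝ), g x = ∫ y : ℝ, exp y * g (exp y) := by
  rw [← range_exp, ← image_univ,
    integral_image_eq_integral_abs_deriv_smul MeasurableSet.univ
      (fun x _ => (hasDerivAt_exp x).hasDerivWithinAt) exp_injective.injOn]
  simp [abs_of_pos (exp_pos _)]

lemma exp_mul_lognormalPdf_exp_rpow {μ σ p : ℝ} (hσ : 0 < σ) (hp : p ≠ 0) (y : ℝ) :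
    exp y * lognormalPdf μ σ (exp y) ^ p
      = (σ * √(2 * π)) ^ (-p) * exp ((1 - p) * μ + (1 - p) ^ 2 * σ ^ 2 / (2 * p))
        * exp (-(p / (2 * σ ^ 2)) * (y - μ - (1 - p) * σ ^ 2 / p) ^ 2) := by
  have hc : 0 < σ * √(2 * π) := by positivity
  have hpdf : lognormalPdf μ σ (exp y)
      = (σ * √(2 * π))⁻¹ * exp (-y - (y - μ) ^ 2 / (2 * σ ^ 2)) := by
    rw [lognormalPdf, if_pos (exp_pos y), log_exp,
      show -y - (y - μ) ^ 2 / (2 * σ ^ 2) = -y + -(y - μ) ^ 2 / (2 * σ ^ 2) by ring, exp_add,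
      exp_neg]
    field_simp
  rw [hpdf, mul_rpow (inv_pos.2 hc).le (exp_pos _).le, inv_rpow hc.le, ← rpow_neg hc.le,
    ← exp_mul, mul_assoc, mul_left_comm, ← exp_add, ← exp_add]
  congr 2
  field_simp
  ring

/-- `∫₀^∞ f_{μ,σ}^p`: the case `c₀ = 1`, `c₁ = c₂ = c₃ = 0` of
`integral_cubic_log_mul_lognormalPdf_rpow`. -/
noncomputable def lognormalRpowIntegral (μ σ p : ℝ) : ℝ :=
  (σ * √(2 * π)) ^ (1 - p) / √p * exp ((1 - p) * μ + (1 - p) ^ 2 * σ ^ 2 / (2 * p))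

lemma integral_cubic_log_mul_lognormalPdf_rpow {μ σ p m : ℝ} (hσ : 0 < σ) (hp : 0 < p)
    (hm : m = (1 - p) * σ ^ 2 / p) (c₀ c₁ c₂ c₃ : ℝ) :
    ∫ x in Ioi (0 : ℝ), (c₀ + c₁ * (log x - μ) + c₂ * (log x - μ) ^ 2 + c₃ * (log x - μ) ^ 3)
        * lognormalPdf μ σ x ^ p
      = lognormalRpowIntegral μ σ p
        * (c₀ + c₁ * m + c₂ * (m ^ 2 + σ ^ 2 / p) + c₃ * (m ^ 3 + 3 * m * σ ^ 2 / p)) := by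
  set P : ℝ → ℝ := fun t => c₀ + c₁ * t + c₂ * t ^ 2 + c₃ * t ^ 3
  set a := p / (2 * σ ^ 2)
  have ha : 0 < a := by positivity
  calc _ = ∫ y : ℝ, (σ * √(2 * π)) ^ (-p) * exp ((1 - p) * μ + (1 - p) ^ 2 * σ ^ 2 / (2 * p))
        * (P (y - μ) * exp (-a * (y - μ - m) ^ 2)) := by
        rw [integral_Ioi_zero_eq_integral_exp_mul_comp_exp]
        congr 1; ext y
        rw [log_exp, mul_left_comm, exp_mul_lognormalPdf_exp_rpow hσ hp.ne', hm]
        ring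
    _ = (σ * √(2 * π)) ^ (-p) * exp ((1 - p) * μ + (1 - p) ^ 2 * σ ^ 2 / (2 * p))
        * ∫ t : ℝ, P t * exp (-a * (t - m) ^ 2) := by
        rw [integral_const_mul, integral_sub_right_eq_self (fun t => P t * exp (-a * (t - m) ^ 2))]
    _ = _ := by
        have hc : 0 < σ * √(2 * π) := by positivity
        have hsqrt : √(π / a) = σ * √(2 * π) / √p := by
          rw [show π / a = (σ * √(2 * π)) ^ 2 / p by
              rw [mul_pow, sq_sqrt (by positivity)]; simp only [a]; field_simp,
            sqrt_div' _ hp.le, sqrt_sq hc.le]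
        rw [integral_cubic_mul_exp_neg_mul_sub_sq ha, hsqrt, lognormalRpowIntegral,
          sub_eq_neg_add 1 p, rpow_add_one hc.ne']
        simp only [a]
        field_simp

lemma mul_sqrt_two_pi_rpow_neg_two_mul {σ : ℝ} (hσ : 0 < σ) (β : ℝ) :
    (σ * √(2 * π)) ^ (-(2 * β)) = (σ ^ (2 * β) * (2 * π) ^ β)⁻¹ := by
  rw [rpow_neg (by positivity), mul_rpow hσ.le (sqrt_nonneg _), sqrt_eq_rpow,
    ← rpow_mul (by positivity)]
  ring_nf

lemma lognormalRpowIntegral_one_add_two_mul {μ σ β : ℝ} (hσ : 0 < σ) (hβ : 0 < 1 + 2 * β) :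
    lognormalRpowIntegral μ σ (1 + 2 * β) = σ * (1 + 2 * β) ^ 2 * Lstar β μ σ := by
  have h52 : (1 + 2 * β) ^ ((5 : ℝ) / 2) = (1 + 2 * β) ^ 2 * √(1 + 2 * β) := by
    rw [sqrt_eq_rpow, ← rpow_natCast, ← rpow_add hβ]; norm_num
  rw [lognormalRpowIntegral, Lstar, show 1 - (1 + 2 * β) = -(2 * β) by ring,
    mul_sqrt_two_pi_rpow_neg_two_mul hσ, rpow_add_one hσ.ne', h52]
  have : 0 < √(1 + 2 * β) := sqrt_pos.2 hβ
  field_simp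

lemma lognormalRpowIntegral_one_add_sq {μ σ β : ℝ} (hσ : 0 < σ) (hβ : 0 < 1 + β) :
    lognormalRpowIntegral μ σ (1 + β) ^ 2 = σ ^ 2 * (1 + β) ^ 2 * Lstarstar β μ σ := by
  have hc : 0 < σ * √(2 * π) := by positivity
  have hsq : ((σ * √(2 * π)) ^ (-β)) ^ 2 = (σ ^ (2 * β) * (2 * π) ^ β)⁻¹ := by
    rw [← rpow_mul_natCast hc.le, ← mul_sqrt_two_pi_rpow_neg_two_mul hσ]
    ring_nf
  rw [lognormalRpowIntegral, Lstarstar, show 1 - (1 + β) = -β by ring, mul_pow, div_pow, hsq,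
    show 2 * β + 2 = 2 * β + 1 + 1 by ring, rpow_add_one hσ.ne', rpow_add_one hσ.ne',
    sq_sqrt hβ.le, ← exp_nat_mul]
  field_simp
  congr 1
  field_simp
  ring

/-- The off-diagonal entry of the matrix `K_β(μ,σ)`. -/
theorem K_entry_12 (μ σ β : ℝ) (hσ : 0 < σ) (hβ : 0 ≤ β) :
    (∫ x in Ioi (0 : ℝ), scoreU1 μ σ x * scoreU2 μ σ x * lognormalPdf μ σ x ^ (1 + 2 * β)) -
        (∫ x in Ioi (0 : ℝ), scoreU1 μ σ x * lognormalPdf μ σ x ^ (1 + β)) *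
          (∫ x in Ioi (0 : ℝ), scoreU2 μ σ x * lognormalPdf μ σ x ^ (1 + β)) =
      Lstar β μ σ * (β * (4 * β - 4 - 8 * β ^ 2 * σ ^ 2 / (1 + 2 * β))) +
        Lstarstar β μ σ * (σ * β ^ 2 * (β * σ ^ 2 - β - 1) / (1 + β)) := by
  have h2β : 0 < 1 + 2 * β := by linarith
  have hβ' : 0 < 1 + β := by linarith
  have e₁₂ (x : ℝ) : scoreU1 μ σ x * scoreU2 μ σ x = 0 + -1 / σ ^ 3 * (log x - μ)
      + 0 * (log x - μ) ^ 2 + 1 / σ ^ 5 * (log x - μ) ^ 3 := by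
    simp only [scoreU1, scoreU2]; field_simp; ring
  have e₁ (x : ℝ) : scoreU1 μ σ x = 0 + 1 / σ ^ 2 * (log x - μ) + 0 * (log x - μ) ^ 2
      + 0 * (log x - μ) ^ 3 := by
    simp only [scoreU1]; ring
  have e₂ (x : ℝ) : scoreU2 μ σ x = -1 / σ + 0 * (log x - μ) + 1 / σ ^ 3 * (log x - μ) ^ 2
      + 0 * (log x - μ) ^ 3 := by
    simp only [scoreU2]; field_simp; ring
  simp only [e₁₂]
  simp only [e₁, e₂]
  rw [integral_cubic_log_mul_lognormalPdf_rpow hσ h2β rfl,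
    integral_cubic_log_mul_lognormalPdf_rpow hσ hβ' rfl,
    integral_cubic_log_mul_lognormalPdf_rpow hσ hβ' rfl, mul_mul_mul_comm, ← sq,
    lognormalRpowIntegral_one_add_sq hσ hβ', lognormalRpowIntegral_one_add_two_mul hσ h2β]
  field_simp
  ring
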